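/- Recursion for the partial derivatives of the Version 2 cost (Lemma 'diff2'): for all x ∈ ℝ^{N+1} and all n ∈ {0,…,N−1}, the partial derivatives of C⁽²⁾ satisfy ∂C⁽²⁾/∂xₙ(x) = Dₙ⁺ + [ā(Dₙ⁺)·f(D_{n+1})·(1 − τρ̄′(Dₙ⁺)Dₙ⁺)/f(Dₙ⁺)]·[∂C⁽²⁾/∂x_{n+1}(x) − D_{n+1}], where Dₙ⁺ and D_{n+1} are evaluated along the dynamics determined by x. -/

import Mathlib

open Real Filter Finset

/-- `Fi f x = F(x) = ∫₀ˣ f(y) dy`. -/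
noncomputable def Fi (f : ℝ → ℝ) (x : ℝ) : ℝ := ∫ y in (0:ℝ)..x, f y

/-- `Ft f x = F̃(x) = ∫₀ˣ y f(y) dy`. -/
noncomputable def Ft (f : ℝ → ℝ) (x : ℝ) : ℝ := ∫ y in (0:ℝ)..x, y * f y

/-- `Gf f Finv = G = F̃ ∘ F⁻¹`. -/
noncomputable def Gf (f Finv : ℝ → ℝ) (x : ℝ) : ℝ := Ft f (Finv x)

/-- `ab τ ρ x = ā(x) = exp(−τ ρ̄(x))`. -/
noncomputable def ab (τ : ℝ) (ρ : ℝ → ℝ) (x : ℝ) : ℝ := Real.exp (-(τ * ρ x))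

/-- Version 2 dynamics: `D₀ = 0`, `Dₙ⁺ = F⁻¹(F(Dₙ) + xₙ)`, `D_{n+1} = ā(Dₙ⁺)·Dₙ⁺`. -/
noncomputable def Dv (f Finv : ℝ → ℝ) (τ : ℝ) (ρ : ℝ → ℝ) (x : ℕ → ℝ) : ℕ → ℝ
  | 0 => 0
  | n + 1 =>
      ab τ ρ (Finv (Fi f (Dv f Finv τ ρ x n) + x n)) * Finv (Fi f (Dv f Finv τ ρ x n) + x n)

/-- Version 2 cost functional `C⁽²⁾`. -/
noncomputable def C2 (f Finv : ℝ → ℝ) (τ : ℝ) (ρ : ℝ → ℝ) (N : ℕ) (x : ℕ → ℝ) : ℝ :=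
  ∑ n ∈ Finset.range (N + 1),
    (Gf f Finv (x n + Fi f (Dv f Finv τ ρ x n)) - Ft f (Dv f Finv τ ρ x n))

/-- `Dₙ⁺ = F⁻¹(F(Dₙ) + xₙ)`, the price impact just after the `n`-th trade. -/
noncomputable def Dvp (f Finv : ℝ → ℝ) (τ : ℝ) (ρ : ℝ → ℝ) (x : ℕ → ℝ) (n : ℕ) : ℝ :=
  Finv (Fi f (Dv f Finv τ ρ x n) + x n)

open Function

/-!
The cost-to-go `T(y, d)` of the remaining trades `y` from impact `d` depends on `d` and on the
first trade `y₀` only through the post-trade level `u = F(d) + y₀`, apart from the term `−F̃(d)`.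
Since `F' = f` and `F̃'(d) = d f(d)`, this gives `∂_d T = f(d) (∂_{y₀} T − d)`. As a function of
`u`, the cost-to-go is `G(u) + T'(ā(F⁻¹u) F⁻¹u)` with `T'` the cost-to-go of the later trades, and
`G' = F⁻¹`; the chain rule through `u ↦ ā(F⁻¹u) F⁻¹u` produces the factor
`ā(Dₙ⁺)(1 − τρ̄′(Dₙ⁺)Dₙ⁺)/f(Dₙ⁺)`, and the first identity turns `∂_d T'` at `D_{n+1}` into
`f(D_{n+1}) (∂C⁽²⁾/∂x_{n+1} − D_{n+1})`.
-/

theorem StrictMono.continuous_of_rightInverse {α β : Type*} [LinearOrder α] [TopologicalSpace α]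
    [OrderTopology α] [DenselyOrdered α] [LinearOrder β] [TopologicalSpace β] [OrderTopology β]
    {g : α → β} {ginv : β → α}
    (hg : StrictMono g) (hinv : RightInverse ginv g) : Continuous ginv := by
  refine Monotone.continuous_of_surjective (fun u v huv => ?_) (fun a => ⟨g a, ?_⟩)
  · rwa [← hg.le_iff_le, hinv u, hinv v]
  · exact hg.injective (hinv (g a))

section Calculus

variable {f : ℝ → ℝ}

theorem hasDerivAt_Fi (hf : Continuous f) (a : ℝ) : HasDerivAt (Fi f) (f a) a :=
  intervalIntegral.integral_hasDerivAt_right (hf.intervalIntegrable _ _)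
    (hf.stronglyMeasurableAtFilter _ _) hf.continuousAt

theorem hasDerivAt_Ft (hf : Continuous f) (a : ℝ) : HasDerivAt (Ft f) (a * f a) a :=
  hasDerivAt_Fi (continuous_id.mul hf) a

theorem strictMono_Fi (hf : Continuous f) (hfpos : ∀ x, 0 < f x) : StrictMono (Fi f) :=
  strictMono_of_deriv_pos fun x => (hasDerivAt_Fi hf x).deriv ▸ hfpos x

theorem hasDerivAt_Finv {Finv : ℝ → ℝ} (hf : Continuous f) (hfpos : ∀ x, 0 < f x)
    (hFinv : ∀ u, Fi f (Finv u) = u) (u : ℝ) : HasDerivAt Finv (f (Finv u))⁻¹ u :=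
  HasDerivAt.of_local_left_inverse
    ((strictMono_Fi hf hfpos).continuous_of_rightInverse hFinv).continuousAt
    (hasDerivAt_Fi hf (Finv u)) (hfpos _).ne' (Eventually.of_forall hFinv)

theorem hasDerivAt_Gf {Finv : ℝ → ℝ} (hf : Continuous f) (hfpos : ∀ x, 0 < f x)
    (hFinv : ∀ u, Fi f (Finv u) = u) (u : ℝ) : HasDerivAt (Gf f Finv) (Finv u) u := by
  have h := (hasDerivAt_Ft hf (Finv u)).comp u (hasDerivAt_Finv hf hfpos hFinv u)
  rwa [mul_assoc, mul_inv_cancel₀ (hfpos _).ne', mul_one] at h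

end Calculus

theorem hasDerivAt_ab_mul_self {τ : ℝ} {ρ : ℝ → ℝ} {a : ℝ} (hρ : DifferentiableAt ℝ ρ a) :
    HasDerivAt (fun d => ab τ ρ d * d) (ab τ ρ a * (1 - τ * deriv ρ a * a)) a := by
  have h : HasDerivAt (fun d => ab τ ρ d * d)
      (ab τ ρ a * -(τ * deriv ρ a) * a + ab τ ρ a * 1) a :=
    (((hρ.hasDerivAt.const_mul τ).neg).exp).mul (hasDerivAt_id a)
  convert h using 1
  ring

section Dynamics

variable (f Finv : ℝ → ℝ) (τ : ℝ) (ρ : ℝ → ℝ)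

/-- The cost of the trades `y 0, …, y (M - 1)` when the impact before the first one is `d`. -/
noncomputable def tailCost : (ℕ → ℝ) → ℕ → ℝ → ℝ
  | _, 0, _ => 0
  | y, M + 1, d =>
      Gf f Finv (y 0 + Fi f d) - Ft f d +
        tailCost (fun i => y (i + 1)) M (ab τ ρ (Finv (Fi f d + y 0)) * Finv (Fi f d + y 0))

/-- The cost of a trade, up to the term `-F̃(d)`, followed by the trades `y 0, …, y (M - 1)`,
as a function of the post-trade level `u = F(d⁺)`. -/
noncomputable def postTradeCost (y : ℕ → ℝ) (M : ℕ) (u : ℝ) : ℝ :=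
  Gf f Finv u + tailCost f Finv τ ρ y M (ab τ ρ (Finv u) * Finv u)

noncomputable def stageCost (x : ℕ → ℝ) (k : ℕ) : ℝ :=
  Gf f Finv (x k + Fi f (Dv f Finv τ ρ x k)) - Ft f (Dv f Finv τ ρ x k)

variable {f Finv τ ρ}

theorem tailCost_succ (y : ℕ → ℝ) (M : ℕ) (d : ℝ) :
    tailCost f Finv τ ρ y (M + 1) d =
      postTradeCost f Finv τ ρ (fun i => y (i + 1)) M (Fi f d + y 0) - Ft f d := by
  rw [tailCost, postTradeCost, add_comm (y 0)]
  ring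

theorem Dv_congr {x y : ℕ → ℝ} {k : ℕ} (h : ∀ i < k, x i = y i) :
    Dv f Finv τ ρ x k = Dv f Finv τ ρ y k := by
  induction k with
  | zero => rfl
  | succ k ih => simp only [Dv, ih fun i hi => h i (by omega), h k k.lt_succ_self]

theorem sum_stageCost_eq_tailCost (x : ℕ → ℝ) (M : ℕ) :
    ∀ m, ∑ k ∈ range M, stageCost f Finv τ ρ x (m + k) =
      tailCost f Finv τ ρ (fun i => x (m + i)) M (Dv f Finv τ ρ x m) := by
  induction M with
  | zero => intro m; rfl
  | succ M ih =>
    intro m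
    have hshift : (fun i => x (m + (i + 1))) = fun i => x (m + 1 + i) := by
      funext i; rw [Nat.add_right_comm, Nat.add_assoc]
    calc ∑ k ∈ range (M + 1), stageCost f Finv τ ρ x (m + k)
        = stageCost f Finv τ ρ x m + ∑ k ∈ range M, stageCost f Finv τ ρ x (m + 1 + k) := by
          rw [sum_range_succ', add_comm]
          simp only [Nat.add_zero, ← Nat.add_assoc, Nat.add_right_comm m 1]
      _ = stageCost f Finv τ ρ x m +
            tailCost f Finv τ ρ (fun i => x (m + 1 + i)) M (Dv f Finv τ ρ x (m + 1)) := by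
          rw [ih]
      _ = tailCost f Finv τ ρ (fun i => x (m + i)) (M + 1) (Dv f Finv τ ρ x m) := by
          rw [tailCost, hshift]
          rfl

theorem C2_update_eq (x : ℕ → ℝ) {N n : ℕ} (hn : n ≤ N) (t : ℝ) :
    C2 f Finv τ ρ N (update x n t) =
      (∑ k ∈ range n, stageCost f Finv τ ρ x k) +
        (postTradeCost f Finv τ ρ (fun i => x (n + 1 + i)) (N - n)
          (Fi f (Dv f Finv τ ρ x n) + t) - Ft f (Dv f Finv τ ρ x n)) := by
  have hDv : ∀ k ≤ n, Dv f Finv τ ρ (update x n t) k = Dv f Finv τ ρ x k := fun k hk =>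
    Dv_congr fun i hi => update_of_ne (by omega) _ _
  have hshift : (fun i => update x n t (n + (i + 1))) = fun i => x (n + 1 + i) := by
    funext i; rw [update_of_ne (by omega)]; congr 1; omega
  change ∑ k ∈ range (N + 1), stageCost f Finv τ ρ (update x n t) k = _
  rw [show N + 1 = n + (N - n + 1) by omega, sum_range_add, sum_stageCost_eq_tailCost,
    tailCost_succ, hshift, hDv n le_rfl]
  simp only [Nat.add_zero, update_self]
  congr 1
  refine sum_congr rfl fun k hk => ?_
  rw [mem_range] at hk
  simp only [stageCost, hDv k hk.le, update_of_ne hk.ne]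

theorem hasDerivAt_postTradeCost (hf : Continuous f) (hfpos : ∀ x, 0 < f x)
    (hFinv : ∀ u, Fi f (Finv u) = u) (hρ : Differentiable ℝ ρ) {y : ℕ → ℝ} {M : ℕ} {u : ℝ}
    (hT : DifferentiableAt ℝ (tailCost f Finv τ ρ y M) (ab τ ρ (Finv u) * Finv u)) :
    HasDerivAt (postTradeCost f Finv τ ρ y M)
      (Finv u + deriv (tailCost f Finv τ ρ y M) (ab τ ρ (Finv u) * Finv u) *
        (ab τ ρ (Finv u) * (1 - τ * deriv ρ (Finv u) * Finv u) / f (Finv u))) u := by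
  have hstep := (hasDerivAt_ab_mul_self (τ := τ) (hρ (Finv u))).comp u
    (hasDerivAt_Finv hf hfpos hFinv u)
  have h := (hasDerivAt_Gf hf hfpos hFinv u).add (hT.hasDerivAt.comp u hstep)
  rw [div_eq_mul_inv]
  exact h

theorem differentiable_tailCost (hf : Continuous f) (hfpos : ∀ x, 0 < f x)
    (hFinv : ∀ u, Fi f (Finv u) = u) (hρ : Differentiable ℝ ρ) (M : ℕ) :
    ∀ y, Differentiable ℝ (tailCost f Finv τ ρ y M) := by
  induction M with
  | zero => intro y; exact differentiable_const 0
  | succ M ih =>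
    intro y d
    have hpost : DifferentiableAt ℝ (postTradeCost f Finv τ ρ (fun i => y (i + 1)) M)
        (Fi f d + y 0) := (hasDerivAt_postTradeCost hf hfpos hFinv hρ (ih _ _)).differentiableAt
    rw [funext (tailCost_succ y M)]
    exact (hpost.comp d ((hasDerivAt_Fi hf d).add_const _).differentiableAt).sub
      (hasDerivAt_Ft hf d).differentiableAt

theorem deriv_tailCost_succ (hf : Continuous f) (hfpos : ∀ x, 0 < f x)
    (hFinv : ∀ u, Fi f (Finv u) = u) (hρ : Differentiable ℝ ρ) (y : ℕ → ℝ) (M : ℕ) (d : ℝ) :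
    deriv (tailCost f Finv τ ρ y (M + 1)) d =
      f d * (deriv (postTradeCost f Finv τ ρ (fun i => y (i + 1)) M) (Fi f d + y 0) - d) := by
  have hpost : DifferentiableAt ℝ (postTradeCost f Finv τ ρ (fun i => y (i + 1)) M)
      (Fi f d + y 0) :=
    (hasDerivAt_postTradeCost hf hfpos hFinv hρ
      (differentiable_tailCost hf hfpos hFinv hρ _ _ _)).differentiableAt
  have h := (hpost.hasDerivAt.comp d ((hasDerivAt_Fi hf d).add_const (y 0))).sub
    (hasDerivAt_Ft hf d)
  rw [funext (tailCost_succ y M)]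
  exact h.deriv.trans (by ring)

theorem deriv_C2_update (x : ℕ → ℝ) {N n : ℕ} (hn : n ≤ N) :
    deriv (fun t => C2 f Finv τ ρ N (update x n t)) (x n) =
      deriv (postTradeCost f Finv τ ρ (fun i => x (n + 1 + i)) (N - n))
        (Fi f (Dv f Finv τ ρ x n) + x n) := by
  simp only [C2_update_eq x hn]
  rw [deriv_const_add, deriv_sub_const, deriv_comp_const_add]

end Dynamics

theorem C2_partial_deriv_recursion_general
    (f Finv : ℝ → ℝ) (hf : Continuous f) (hfpos : ∀ x, 0 < f x)
    (hFinv₁ : ∀ x, Fi f (Finv x) = x)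
    (τ : ℝ) (ρ : ℝ → ℝ) (hρ : ContDiff ℝ 1 ρ)
    (N : ℕ) :
    ∀ (x : ℕ → ℝ) (n : ℕ), n < N →
      deriv (fun t : ℝ => C2 f Finv τ ρ N (Function.update x n t)) (x n) =
        Dvp f Finv τ ρ x n +
          (ab τ ρ (Dvp f Finv τ ρ x n) * f (Dv f Finv τ ρ x (n + 1)) *
              (1 - τ * deriv ρ (Dvp f Finv τ ρ x n) * Dvp f Finv τ ρ x n) /
            f (Dvp f Finv τ ρ x n)) *
          (deriv (fun t : ℝ => C2 f Finv τ ρ N (Function.update x (n + 1) t)) (x (n + 1)) -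
            Dv f Finv τ ρ x (n + 1)) := by
  intro x n hn
  have hρ' : Differentiable ℝ ρ := hρ.differentiable one_ne_zero
  have hshift : (fun i => x (n + 1 + (i + 1))) = fun i => x (n + 1 + 1 + i) := by
    funext i; congr 1; omega
  have hpost := hasDerivAt_postTradeCost (τ := τ) (u := Fi f (Dv f Finv τ ρ x n) + x n) hf hfpos
    hFinv₁ hρ' (differentiable_tailCost hf hfpos hFinv₁ hρ' (N - n) (fun i => x (n + 1 + i)) _)
  rw [deriv_C2_update x hn.le, deriv_C2_update x hn, hpost.deriv, show N - n = N - (n + 1) + 1 by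
    omega, deriv_tailCost_succ hf hfpos hFinv₁ hρ', hshift]
  have hfP := (hfpos (Dvp f Finv τ ρ x n)).ne'
  simp only [Dvp, Dv, Nat.add_zero] at hfP ⊢
  field_simp

/-- Recursion for the partial derivatives of the Version 2 cost:
`∂C⁽²⁾/∂xₙ = Dₙ⁺ + [ā(Dₙ⁺)f(D_{n+1})(1 − τρ̄′(Dₙ⁺)Dₙ⁺)/f(Dₙ⁺)]·[∂C⁽²⁾/∂x_{n+1} − D_{n+1}]`. -/
theorem C2_partial_deriv_recursion
    (f Finv : ℝ → ℝ) (hf : Continuous f) (hfpos : ∀ x, 0 < f x)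
    (htop : Tendsto (Fi f) atTop atTop) (hbot : Tendsto (Fi f) atBot atBot)
    (hFinv₁ : ∀ x, Fi f (Finv x) = x) (hFinv₂ : ∀ x, Finv (Fi f x) = x)
    (τ : ℝ) (hτ : 0 < τ) (ρ : ℝ → ℝ) (hρ : ContDiff ℝ 1 ρ)
    (N : ℕ) (hN : 1 ≤ N) :
    ∀ (x : ℕ → ℝ) (n : ℕ), n < N →
      deriv (fun t : ℝ => C2 f Finv τ ρ N (Function.update x n t)) (x n) =
        Dvp f Finv τ ρ x n +
          (ab τ ρ (Dvp f Finv τ ρ x n) * f (Dv f Finv τ ρ x (n + 1)) *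
              (1 - τ * deriv ρ (Dvp f Finv τ ρ x n) * Dvp f Finv τ ρ x n) /
            f (Dvp f Finv τ ρ x n)) *
          (deriv (fun t : ℝ => C2 f Finv τ ρ N (Function.update x (n + 1) t)) (x (n + 1)) -
            Dv f Finv τ ρ x (n + 1)) :=
  C2_partial_deriv_recursion_general f Finv hf hfpos hFinv₁ τ ρ hρ N
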